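/- Let W ∈ R^{k×d} with k < d, and let z be a random vector with positive definite covariance Σ whose largest eigenvalue (of Σ^{1/2}) is λ_max. For a fixed linear function f(z) = wᵀz + b, the minimum over (w̃, b̃) of E_z[(f(z) − w̃ᵀWz − b̃)²] is at most λ_max² times the squared distance from Qᵀw to the column space of R, where Wᵀ = QR is a QR factorization with Q orthogonal. -/

import Mathlib

/-!
Take `w̃ = x` and choose `b̃` so that the residual `(w - Wᵀx) ⬝ᵥ z + b - b̃` is centred. Its mean
square is then the variance `vᵀ Σ v` with `v = w - Wᵀx`, which is at most `λ_max² ‖v‖²` because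
`Σ = S²` and the spectrum of `S` lies in `[0, λ_max]`. Finally `‖v‖ = ‖Qᵀv‖ = ‖Qᵀw - Rx‖` since
`Q` is orthogonal and `Wᵀ = QR`, and minimising over `x` gives the bound.
-/

open MeasureTheory Matrix ProbabilityTheory
open scoped MatrixOrder

lemma Matrix.PosSemidef.dotProduct_mul_self_mulVec_le {n : Type*} [Fintype n] [DecidableEq n]
    {S : Matrix n n ℝ} (hS : S.PosSemidef) {c : ℝ} (hc : ∀ t ∈ spectrum ℝ S, t ≤ c)
    (v : n → ℝ) :
    v ⬝ᵥ (S * S) *ᵥ v ≤ c ^ 2 * (v ⬝ᵥ v) := by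
  have hspec : spectrum ℝ (S * S) = (· ^ 2) '' spectrum ℝ S := by
    rw [← sq, ← cfc_pow_id (R := ℝ) S 2, cfc_map_spectrum (R := ℝ) _ S]
  have hle : S * S ≤ algebraMap ℝ _ (c ^ 2) := by
    refine le_algebraMap_of_spectrum_le ?_
    rw [hspec]
    rintro _ ⟨t, ht, rfl⟩
    have ht0 : 0 ≤ t := spectrum_nonneg_of_nonneg (𝕜 := ℝ) hS.nonneg ht
    exact pow_le_pow_left₀ ht0 (hc t ht) 2
  simpa only [star_trivial, Algebra.algebraMap_eq_smul_one, sub_mulVec, smul_mulVec, one_mulVec,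
    dotProduct_sub, dotProduct_smul, smul_eq_mul, sub_nonneg]
    using (le_iff.mp hle).dotProduct_mulVec_nonneg v

namespace ProbabilityTheory

variable {ι Ω : Type*} {mΩ : MeasurableSpace Ω}

noncomputable def covMatrix (X : ι → Ω → ℝ) (μ : Measure Ω) : Matrix ι ι ℝ :=
  Matrix.of fun i j ↦ cov[X i, X j; μ]

lemma covariance_dotProduct [Fintype ι] {μ : Measure Ω} [IsFiniteMeasure μ] {X : ι → Ω → ℝ}
    (hX : ∀ i, MemLp (X i) 2 μ) (u v : ι → ℝ) :
    cov[fun ω ↦ u ⬝ᵥ (X · ω), fun ω ↦ v ⬝ᵥ (X · ω); μ] = u ⬝ᵥ covMatrix X μ *ᵥ v := by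
  simp only [dotProduct]
  rw [covariance_fun_sum_fun_sum (fun i ↦ (hX i).const_mul (u i))
    (fun j ↦ (hX j).const_mul (v j))]
  simp only [covariance_const_mul_left, covariance_const_mul_right, mulVec, dotProduct,
    Finset.mul_sum, covMatrix, of_apply]
  exact Finset.sum_congr rfl fun i _ ↦ Finset.sum_congr rfl fun j _ ↦ by ring

end ProbabilityTheory

lemma Matrix.transpose_mulVec_dotProduct_self_of_mem_orthogonalGroup {n : Type*} [Fintype n]
    [DecidableEq n] {Q : Matrix n n ℝ} (hQ : Q ∈ orthogonalGroup n ℝ) (v : n → ℝ) :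
    (Qᵀ *ᵥ v) ⬝ᵥ (Qᵀ *ᵥ v) = v ⬝ᵥ v := by
  rw [dotProduct_mulVec, vecMul_transpose, mulVec_mulVec, (mem_orthogonalGroup_iff n ℝ).mp hQ,
    one_mulVec]

lemma Matrix.sub_vecMul_dotProduct_self_of_transpose_eq_mul {m n : Type*} [Fintype m] [Fintype n]
    [DecidableEq n] {W : Matrix m n ℝ} {Q : Matrix n n ℝ} {R : Matrix n m ℝ}
    (hQ : Q ∈ orthogonalGroup n ℝ) (hQR : Wᵀ = Q * R) (w : n → ℝ) (x : m → ℝ) :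
    (w - x ᵥ* W) ⬝ᵥ (w - x ᵥ* W) = ∑ i, ((R *ᵥ x) i - (Qᵀ *ᵥ w) i) ^ 2 := by
  have hQv : Qᵀ *ᵥ (w - x ᵥ* W) = Qᵀ *ᵥ w - R *ᵥ x := by
    rw [← mulVec_transpose, hQR, mulVec_sub, mulVec_mulVec, ← Matrix.mul_assoc,
      (mem_orthogonalGroup_iff' n ℝ).mp hQ, Matrix.one_mul]
  rw [← transpose_mulVec_dotProduct_self_of_mem_orthogonalGroup hQ, hQv]
  simp only [dotProduct, Pi.sub_apply, ← sq, ← neg_sub ((R *ᵥ x) _), neg_sq]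

theorem min_error_le_dist_bound_general (d k : ℕ)
    (μ : Measure (Fin d → ℝ)) [IsProbabilityMeasure μ]
    (hL2 : ∀ i : Fin d, MemLp (fun z => z i) 2 μ)
    (Sigma S : Matrix (Fin d) (Fin d) ℝ)
    (hcov : ∀ i j : Fin d,
      Sigma i j = ∫ z, (z i - ∫ y, y i ∂μ) * (z j - ∫ y, y j ∂μ) ∂μ)
    (hS : S.PosDef) (hSS : S * S = Sigma)
    (lammax : ℝ)
    (hub : ∀ t ∈ spectrum ℝ S, t ≤ lammax)
    (W : Matrix (Fin k) (Fin d) ℝ)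
    (Q : Matrix (Fin d) (Fin d) ℝ) (hQ : Q ∈ Matrix.orthogonalGroup (Fin d) ℝ)
    (R : Matrix (Fin d) (Fin k) ℝ)
    (hQR : Wᵀ = Q * R) (w : Fin d → ℝ) (b : ℝ) :
    sInf {e : ℝ | ∃ (wt : Fin k → ℝ) (bt : ℝ),
        e = ∫ z, (w ⬝ᵥ z + b - (wt ⬝ᵥ W.mulVec z + bt)) ^ 2 ∂μ}
      ≤ lammax ^ 2 *
        sInf {e : ℝ | ∃ x : Fin k → ℝ,
          e = ∑ i : Fin d, (R.mulVec x i - Qᵀ.mulVec w i) ^ 2} := by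
  set errors := {e : ℝ | ∃ (wt : Fin k → ℝ) (bt : ℝ),
    e = ∫ z, (w ⬝ᵥ z + b - (wt ⬝ᵥ W.mulVec z + bt)) ^ 2 ∂μ}
  set residual : (Fin k → ℝ) → ℝ := fun x ↦ ∑ i : Fin d, (R.mulVec x i - Qᵀ.mulVec w i) ^ 2
  have hSigma : Sigma = covMatrix (fun i z ↦ z i) μ := Matrix.ext hcov
  have le_residual (x : Fin k → ℝ) : sInf errors ≤ lammax ^ 2 * residual x := by
    set v := w - x ᵥ* W
    have hmem : cov[fun z ↦ v ⬝ᵥ z, fun z ↦ v ⬝ᵥ z; μ] ∈ errors := by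
      refine ⟨x, b + μ[fun z ↦ v ⬝ᵥ z], integral_congr_ae (.of_forall fun z ↦ ?_)⟩
      simp only [v, sub_dotProduct, dotProduct_mulVec]
      ring
    calc sInf errors ≤ cov[fun z ↦ v ⬝ᵥ z, fun z ↦ v ⬝ᵥ z; μ] :=
          csInf_le ⟨0, by rintro _ ⟨wt, bt, rfl⟩; positivity⟩ hmem
      _ = v ⬝ᵥ (S * S) *ᵥ v := by rw [hSS, hSigma]; exact covariance_dotProduct hL2 v v
      _ ≤ lammax ^ 2 * (v ⬝ᵥ v) := hS.posSemidef.dotProduct_mul_self_mulVec_le hub v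
      _ = lammax ^ 2 * residual x := by
          rw [sub_vecMul_dotProduct_self_of_transpose_eq_mul hQ hQR]
  have hrange : {e : ℝ | ∃ x, e = residual x} = Set.range residual := by
    ext; simp [eq_comm]
  rw [hrange, ← iInf, Real.mul_iInf_of_nonneg (sq_nonneg _)]
  exact le_ciInf le_residual

/-- For `W ∈ ℝ^{k×d}` with `k < d` and `z` a random vector with positive definite covariance `Σ`
whose square root `S` has largest eigenvalue `lammax`, the minimal expected squared error of
approximating `f(z) = wᵀz + b` by a linear function of `W z` is at most `lammax²` times the
squared distance from `Qᵀ w` to the column space of `R`, where `Wᵀ = Q R` with `Q` orthogonal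
and `R` upper triangular. -/
theorem min_error_le_dist_bound (d k : ℕ) (hk : k < d)
    (μ : Measure (Fin d → ℝ)) [IsProbabilityMeasure μ]
    (hL2 : ∀ i : Fin d, MemLp (fun z => z i) 2 μ)
    (Sigma S : Matrix (Fin d) (Fin d) ℝ)
    (hcov : ∀ i j : Fin d,
      Sigma i j = ∫ z, (z i - ∫ y, y i ∂μ) * (z j - ∫ y, y j ∂μ) ∂μ)
    (hSigma : Sigma.PosDef) (hS : S.PosDef) (hSS : S * S = Sigma)
    (lammax : ℝ) (hmem : lammax ∈ spectrum ℝ S)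
    (hub : ∀ t ∈ spectrum ℝ S, t ≤ lammax)
    (W : Matrix (Fin k) (Fin d) ℝ)
    (Q : Matrix (Fin d) (Fin d) ℝ) (hQ : Q ∈ Matrix.orthogonalGroup (Fin d) ℝ)
    (R : Matrix (Fin d) (Fin k) ℝ)
    (htri : ∀ (i : Fin d) (j : Fin k), (j : ℕ) < (i : ℕ) → R i j = 0)
    (hQR : Wᵀ = Q * R) (w : Fin d → ℝ) (b : ℝ) :
    sInf {e : ℝ | ∃ (wt : Fin k → ℝ) (bt : ℝ),
        e = ∫ z, (w ⬝ᵥ z + b - (wt ⬝ᵥ W.mulVec z + bt)) ^ 2 ∂μ}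
      ≤ lammax ^ 2 *
        sInf {e : ℝ | ∃ x : Fin k → ℝ,
          e = ∑ i : Fin d, (R.mulVec x i - Qᵀ.mulVec w i) ^ 2} :=
  min_error_le_dist_bound_general d k μ hL2 Sigma S hcov hS hSS lammax hub W Q hQ R hQR w b
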